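/- arXiv:math/0512033 — 2 statements merged into one kernel-verified Lean document; each statement's English description precedes it below -/
import Mathlib

section
/- Suppose (Ω,T) is a uniquely ergodic dynamical system (Ω a compact metric space, T a homeomorphism with a unique T-invariant Borel probability measure) and A : Ω → SL(2,ℝ) is continuous. Assume there exist continuous maps U, V from Ω to ℙℝ² and constants C̃, β̃ > 0 such that ‖A(n,ω)u‖ ≤ C̃ e^{−β̃ n}‖u‖ for all n ≥ 0 and u ∈ U(ω), and ‖A(−n,ω)v‖ ≤ C̃ e^{−β̃ n}‖v‖ for all n ≥ 0 and v ∈ V(ω). Then there exist a continuous map P from Ω to the (not necessarily orthogonal) projections on ℝ² and constants C, β > 0 such that ‖A(n,ω) P(ω) A(m,ω)^{−1}‖ ≤ C e^{−β(n−m)} for all n ≥ m and ‖A(n,ω)(1 − P(ω)) A(m,ω)^{−1}‖ ≤ C e^{−β(m−n)} for all n ≤ m. -/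
open MeasureTheory Filter Topology

noncomputable section

variable {Ω : Type*} [MetricSpace Ω] [CompactSpace Ω]
  [MeasurableSpace Ω] [BorelSpace Ω]

attribute [local instance] Matrix.frobeniusNormedAddCommGroup

/-- Forward iterates `A(n,ω) = A(T^{n-1}ω) ⋯ A(ω)` of a cocycle. -/
def fwd (T : Ω ≃ₜ Ω) (M : Ω → Matrix (Fin 2) (Fin 2) ℝ) :
    ℕ → Ω → Matrix (Fin 2) (Fin 2) ℝ
  | 0, _ => 1
  | n + 1, x => M ((⇑T)^[n] x) * fwd T M n x

/-- The two-sided iterates `A(n,ω)` of a cocycle, `n ∈ ℤ`; for `n < 0` one has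
`A(n,ω) = A(Tⁿω)⁻¹ ⋯ A(T⁻¹ω)⁻¹`. -/
def cocZ (T : Ω ≃ₜ Ω) (M : Ω → Matrix (Fin 2) (Fin 2) ℝ) (n : ℤ) (x : Ω) :
    Matrix (Fin 2) (Fin 2) ℝ :=
  if 0 ≤ n then fwd T M n.toNat x
  else (fwd T M (-n).toNat ((⇑T.symm)^[(-n).toNat] x))⁻¹

/-- `(Ω,T)` is uniquely ergodic: there is exactly one `T`-invariant Borel probability
measure. -/
def UniquelyErgodic (T : Ω ≃ₜ Ω) : Prop :=
  ∃! μ : ProbabilityMeasure Ω, Measure.map T (μ : Measure Ω) = (μ : Measure Ω)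

/-- A cocycle is uniform if `(1/n) log ‖A(n,ω)‖` converges uniformly on `Ω`. -/
def IsUniform (T : Ω ≃ₜ Ω) (M : Ω → Matrix (Fin 2) (Fin 2) ℝ) : Prop :=
  ∃ γ : ℝ, TendstoUniformly (fun n x => Real.log ‖fwd T M n x‖ / n) (fun _ => γ) atTop

instance : TopologicalSpace (Projectivization ℝ (Fin 2 → ℝ)) :=
  instTopologicalSpaceQuotient

/-- Property (i): `A` is uniform with positive Lyapunov exponent. -/
def PropI (T : Ω ≃ₜ Ω) (M : Ω → Matrix (Fin 2) (Fin 2) ℝ) : Prop :=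
  ∃ γ > (0 : ℝ),
    TendstoUniformly (fun n x => Real.log ‖fwd T M n x‖ / n) (fun _ => γ) atTop

/-- Property (ii): exponential dichotomy via a continuous family of projections. -/
def PropII (T : Ω ≃ₜ Ω) (M : Ω → Matrix (Fin 2) (Fin 2) ℝ) : Prop :=
  ∃ P : Ω → Matrix (Fin 2) (Fin 2) ℝ, Continuous P ∧ (∀ x, P x * P x = P x) ∧
    ∃ C > (0 : ℝ), ∃ β > (0 : ℝ),
      (∀ x : Ω, ∀ n m : ℤ, m ≤ n →
        ‖cocZ T M n x * P x * (cocZ T M m x)⁻¹‖ ≤ C * Real.exp (-β * (n - m))) ∧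
      (∀ x : Ω, ∀ n m : ℤ, n ≤ m →
        ‖cocZ T M n x * (1 - P x) * (cocZ T M m x)⁻¹‖ ≤ C * Real.exp (-β * (m - n)))

/-- Property (iii): continuous families of contracted directions in forward and
backward time. -/
def PropIII (T : Ω ≃ₜ Ω) (M : Ω → Matrix (Fin 2) (Fin 2) ℝ) : Prop :=
  ∃ U V : Ω → Projectivization ℝ (Fin 2 → ℝ), Continuous U ∧ Continuous V ∧
    ∃ C > (0 : ℝ), ∃ β > (0 : ℝ),
      (∀ x : Ω, ∀ u ∈ (U x).submodule, ∀ n : ℕ,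
        ‖(fwd T M n x).mulVec u‖ ≤ C * Real.exp (-β * n) * ‖u‖) ∧
      (∀ x : Ω, ∀ v ∈ (V x).submodule, ∀ n : ℕ,
        ‖(cocZ T M (-(n : ℤ)) x).mulVec v‖ ≤ C * Real.exp (-β * n) * ‖v‖)

set_option linter.unusedSectionVars false
set_option linter.unreachableTactic false
set_option linter.unusedTactic false
set_option maxHeartbeats 1000000

open LinearAlgebra.Projectivization Projectivization

namespace Dich


/-- 2D determinant of two vectors. -/
def dt (u v : Fin 2 → ℝ) : ℝ := u 0 * v 1 - u 1 * v 0

lemma norm_mat_eq (A : Matrix (Fin 2) (Fin 2) ℝ) :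
    ‖A‖ = Real.sqrt (A 0 0^2 + A 0 1^2 + (A 1 0^2 + A 1 1^2)) := by
  rw [Matrix.frobenius_norm_def]
  have h : ∀ x:ℝ, ‖x‖ ^ (2:ℝ) = x^2 := fun x => by
    rw [show (2:ℝ) = ((2:ℕ):ℝ) by norm_num, Real.rpow_natCast, Real.norm_eq_abs, sq_abs]
  simp only [Fin.sum_univ_two, h]
  rw [Real.sqrt_eq_rpow]

lemma entry_le_norm (A : Matrix (Fin 2) (Fin 2) ℝ) (i j : Fin 2) : |A i j| ≤ ‖A‖ := by
  rw [norm_mat_eq]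
  rw [show |A i j| = Real.sqrt ((A i j)^2) by rw [Real.sqrt_sq_eq_abs]]
  apply Real.sqrt_le_sqrt
  fin_cases i <;> fin_cases j <;> simp only [Fin.zero_eta, Fin.mk_one] <;>
    nlinarith [sq_nonneg (A 0 0), sq_nonneg (A 0 1),
    sq_nonneg (A 1 0), sq_nonneg (A 1 1)]

lemma norm_mat_le (A : Matrix (Fin 2) (Fin 2) ℝ) :
    ‖A‖ ≤ |A 0 0| + |A 0 1| + |A 1 0| + |A 1 1| := by
  rw [norm_mat_eq]
  have h : A 0 0^2 + A 0 1^2 + (A 1 0^2 + A 1 1^2) ≤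
      (|A 0 0| + |A 0 1| + |A 1 0| + |A 1 1|)^2 := by
    nlinarith [abs_nonneg (A 0 0), abs_nonneg (A 0 1), abs_nonneg (A 1 0), abs_nonneg (A 1 1),
      sq_abs (A 0 0), sq_abs (A 0 1), sq_abs (A 1 0), sq_abs (A 1 1),
      mul_nonneg (abs_nonneg (A 0 0)) (abs_nonneg (A 0 1)),
      mul_nonneg (abs_nonneg (A 0 0)) (abs_nonneg (A 1 0)),
      mul_nonneg (abs_nonneg (A 0 0)) (abs_nonneg (A 1 1)),
      mul_nonneg (abs_nonneg (A 0 1)) (abs_nonneg (A 1 0)),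
      mul_nonneg (abs_nonneg (A 0 1)) (abs_nonneg (A 1 1)),
      mul_nonneg (abs_nonneg (A 1 0)) (abs_nonneg (A 1 1))]
  calc Real.sqrt (A 0 0^2 + A 0 1^2 + (A 1 0^2 + A 1 1^2))
      ≤ Real.sqrt ((|A 0 0| + |A 0 1| + |A 1 0| + |A 1 1|)^2) := Real.sqrt_le_sqrt h
    _ = |A 0 0| + |A 0 1| + |A 1 0| + |A 1 1| := by
        rw [Real.sqrt_sq (by positivity)]

lemma entry_le_vec (w : Fin 2 → ℝ) (i : Fin 2) : |w i| ≤ ‖w‖ := norm_le_pi_norm w i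

lemma mulVec_apply (A : Matrix (Fin 2) (Fin 2) ℝ) (w : Fin 2 → ℝ) (i : Fin 2) :
    (A.mulVec w) i = A i 0 * w 0 + A i 1 * w 1 := by
  simp [Matrix.mulVec, dotProduct, Fin.sum_univ_two]

lemma norm_mulVec_le (A : Matrix (Fin 2) (Fin 2) ℝ) (w : Fin 2 → ℝ) :
    ‖A.mulVec w‖ ≤ 2 * ‖A‖ * ‖w‖ := by
  have hA : (0:ℝ) ≤ ‖A‖ := norm_nonneg _
  have hw : (0:ℝ) ≤ ‖w‖ := norm_nonneg _
  apply pi_norm_le_iff_of_nonneg (by positivity) |>.2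
  intro i
  rw [Real.norm_eq_abs, mulVec_apply]
  calc |A i 0 * w 0 + A i 1 * w 1| ≤ |A i 0| * |w 0| + |A i 1| * |w 1| := by
        refine (abs_add_le _ _).trans ?_; rw [abs_mul, abs_mul]
    _ ≤ ‖A‖ * ‖w‖ + ‖A‖ * ‖w‖ := by
        gcongr <;> first | exact entry_le_norm A i _ | exact entry_le_vec w _
    _ = 2 * ‖A‖ * ‖w‖ := by ring

lemma norm_le_of_mulVec_le {A : Matrix (Fin 2) (Fin 2) ℝ} {c : ℝ}
    (h : ∀ w, ‖A.mulVec w‖ ≤ c * ‖w‖) : ‖A‖ ≤ 4 * c := by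
  have h0 := h (Pi.single 0 1)
  have h1 := h (Pi.single 1 1)
  have hs : ∀ j : Fin 2, ‖(Pi.single j 1 : Fin 2 → ℝ)‖ = 1 := by
    intro j; rw [Pi.norm_single]; norm_num
  rw [hs 0, mul_one] at h0; rw [hs 1, mul_one] at h1
  have e0 : ∀ i, A i 0 = (A.mulVec (Pi.single 0 1)) i := by
    intro i; rw [mulVec_apply]; simp
  have e1 : ∀ i, A i 1 = (A.mulVec (Pi.single 1 1)) i := by
    intro i; rw [mulVec_apply]; simp
  have b00 : |A 0 0| ≤ c := by rw [e0 0]; exact (entry_le_vec _ 0).trans h0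
  have b10 : |A 1 0| ≤ c := by rw [e0 1]; exact (entry_le_vec _ 1).trans h0
  have b01 : |A 0 1| ≤ c := by rw [e1 0]; exact (entry_le_vec _ 0).trans h1
  have b11 : |A 1 1| ≤ c := by rw [e1 1]; exact (entry_le_vec _ 1).trans h1
  calc ‖A‖ ≤ |A 0 0| + |A 0 1| + |A 1 0| + |A 1 1| := norm_mat_le A
    _ ≤ 4 * c := by linarith

lemma abs_dt_le (u v : Fin 2 → ℝ) : |dt u v| ≤ 2 * ‖u‖ * ‖v‖ := by
  have h0 := entry_le_vec u 0; have h1 := entry_le_vec u 1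
  have g0 := entry_le_vec v 0; have g1 := entry_le_vec v 1
  have : |dt u v| ≤ |u 0| * |v 1| + |u 1| * |v 0| := by
    rw [dt]; refine (abs_sub _ _).trans ?_; rw [abs_mul, abs_mul]
  refine this.trans ?_
  have := abs_nonneg (u 0); have := abs_nonneg (u 1)
  have := abs_nonneg (v 0); have := abs_nonneg (v 1)
  have := norm_nonneg u; have := norm_nonneg v
  nlinarith

lemma dt_mulVec (A : Matrix (Fin 2) (Fin 2) ℝ) (u v : Fin 2 → ℝ) :
    dt (A.mulVec u) (A.mulVec v) = A.det * dt u v := by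
  rw [Matrix.det_fin_two]
  simp only [dt, mulVec_apply]; ring

lemma vec_ne_cases {v : Fin 2 → ℝ} (hv : v ≠ 0) : v 0 ≠ 0 ∨ v 1 ≠ 0 := by
  by_contra h
  push_neg at h
  exact hv (funext fun i => by fin_cases i <;> simp [h.1, h.2])

lemma dt_eq_zero_iff {u v : Fin 2 → ℝ} (hu : u ≠ 0) (hv : v ≠ 0) :
    dt u v = 0 ↔ ∃ c : ℝ, c • v = u := by
  constructor
  · intro h
    rcases vec_ne_cases hv with h0 | h1
    · refine ⟨u 0 / v 0, funext fun i => ?_⟩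
      fin_cases i
      · simp [div_mul_cancel₀, h0]
      · show u 0 / v 0 * v 1 = u 1
        rw [dt] at h; field_simp; nlinarith
    · refine ⟨u 1 / v 1, funext fun i => ?_⟩
      fin_cases i
      · show u 1 / v 1 * v 0 = u 0
        rw [dt] at h; field_simp; nlinarith
      · simp [div_mul_cancel₀, h1]
  · rintro ⟨c, rfl⟩
    simp [dt]; ring




/-- Projection onto the line spanned by `u` along the line spanned by `v`. -/
def Pm (u v : Fin 2 → ℝ) : Matrix (Fin 2) (Fin 2) ℝ :=
  (dt u v)⁻¹ • Matrix.of ![![u 0 * v 1, -(u 0 * v 0)], ![u 1 * v 1, -(u 1 * v 0)]]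


lemma Pm_entries0 (u v : Fin 2 → ℝ) (i : Fin 2) :
    Pm u v i 0 = (dt u v)⁻¹ * (u i * v 1) := by
  fin_cases i <;> simp [Pm, Matrix.of_apply] <;> ring

lemma Pm_entries1 (u v : Fin 2 → ℝ) (i : Fin 2) :
    Pm u v i 1 = -((dt u v)⁻¹ * (u i * v 0)) := by
  fin_cases i <;> simp [Pm, Matrix.of_apply] <;> ring

lemma Pm_mulVec (u v w : Fin 2 → ℝ) :
    (Pm u v).mulVec w = ((dt u v)⁻¹ * dt w v) • u := by
  funext i
  rw [mulVec_apply, Pm_entries0, Pm_entries1]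
  simp only [dt, Pi.smul_apply, smul_eq_mul]
  ring

lemma Pm_mulVec_left {u v : Fin 2 → ℝ} (h : dt u v ≠ 0) : (Pm u v).mulVec u = u := by
  rw [Pm_mulVec, inv_mul_cancel₀ h, one_smul]

lemma Pm_mulVec_right (u v : Fin 2 → ℝ) : (Pm u v).mulVec v = 0 := by
  rw [Pm_mulVec]
  have : dt v v = 0 := by simp [dt]; ring
  simp [this]

lemma decompose {u v : Fin 2 → ℝ} (h : dt u v ≠ 0) (w : Fin 2 → ℝ) :
    w = ((dt u v)⁻¹ * dt w v) • u + ((dt u v)⁻¹ * dt u w) • v := by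
  have hD : u 0 * v 1 - u 1 * v 0 ≠ 0 := h
  funext i
  fin_cases i <;>
    simp only [Fin.zero_eta, Fin.mk_one, Pi.add_apply, Pi.smul_apply, smul_eq_mul, dt] <;>
    field_simp <;> ring

lemma one_sub_Pm_mulVec {u v : Fin 2 → ℝ} (h : dt u v ≠ 0) (w : Fin 2 → ℝ) :
    (1 - Pm u v).mulVec w = ((dt u v)⁻¹ * dt u w) • v := by
  rw [Matrix.sub_mulVec, Matrix.one_mulVec, Pm_mulVec, sub_eq_iff_eq_add]
  conv_lhs => rw [decompose h w]
  exact add_comm _ _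

lemma matrix_ext_of_mulVec {A B : Matrix (Fin 2) (Fin 2) ℝ}
    (h : ∀ w, A.mulVec w = B.mulVec w) : A = B := by
  ext i j
  have h0 := congrFun (h (Pi.single j 1)) i
  simpa [Matrix.mulVec_single] using h0

lemma Pm_idem {u v : Fin 2 → ℝ} (h : dt u v ≠ 0) : Pm u v * Pm u v = Pm u v := by
  apply matrix_ext_of_mulVec
  intro w
  rw [← Matrix.mulVec_mulVec, Pm_mulVec u v w, Matrix.mulVec_smul, Pm_mulVec_left h]

lemma smul_fun_apply (c : ℝ) (u : Fin 2 → ℝ) (i : Fin 2) : (c • u) i = c * u i := rfl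

lemma dt_smul_left (c : ℝ) (u v : Fin 2 → ℝ) : dt (c • u) v = c * dt u v := by
  simp only [dt, smul_fun_apply]; ring

lemma dt_smul_right (c : ℝ) (u v : Fin 2 → ℝ) : dt u (c • v) = c * dt u v := by
  simp only [dt, smul_fun_apply]; ring

lemma matrix_ext2 {A B : Matrix (Fin 2) (Fin 2) ℝ}
    (h0 : ∀ i, A i 0 = B i 0) (h1 : ∀ i, A i 1 = B i 1) : A = B := by
  ext i j
  fin_cases j
  · exact h0 i
  · exact h1 i

lemma Pm_smul_left {c : ℝ} (hc : c ≠ 0) (u v : Fin 2 → ℝ) : Pm (c • u) v = Pm u v := by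
  have hcc : c * c⁻¹ = 1 := mul_inv_cancel₀ hc
  apply matrix_ext2 <;> intro i <;>
    simp only [Pm_entries0, Pm_entries1, dt_smul_left, mul_inv, smul_fun_apply]
  · linear_combination (u i * v 1 * (dt u v)⁻¹) * hcc
  · linear_combination (-(u i * v 0 * (dt u v)⁻¹)) * hcc

lemma Pm_smul_right {c : ℝ} (hc : c ≠ 0) (u v : Fin 2 → ℝ) : Pm u (c • v) = Pm u v := by
  have hcc : c * c⁻¹ = 1 := mul_inv_cancel₀ hc
  apply matrix_ext2 <;> intro i <;>
    simp only [Pm_entries0, Pm_entries1, dt_smul_right, mul_inv, smul_fun_apply]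
  · linear_combination (u i * v 1 * (dt u v)⁻¹) * hcc
  · linear_combination (-(u i * v 0 * (dt u v)⁻¹)) * hcc



variable (T : Ω ≃ₜ Ω) (M : Ω → Matrix (Fin 2) (Fin 2) ℝ)

/-- iteration of `T` indexed by `ℤ`. -/
def itZ (k : ℤ) (x : Ω) : Ω := (T.toEquiv ^ k) x

lemma itZ_zero (x : Ω) : itZ T 0 x = x := rfl

lemma itZ_add_one (k : ℤ) (x : Ω) : itZ T (k + 1) x = itZ T k (T x) := by
  simp only [itZ, zpow_add_one, Equiv.Perm.mul_apply]
  rfl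

lemma itZ_sub_one (k : ℤ) (x : Ω) : itZ T (k - 1) x = itZ T k (T.symm x) := by
  simp only [itZ, zpow_sub_one, Equiv.Perm.mul_apply]
  rfl

lemma itZ_natCast (n : ℕ) (x : Ω) : itZ T (n : ℤ) x = (⇑T)^[n] x := by
  induction n generalizing x with
  | zero => rfl
  | succ m ih =>
    rw [show ((m + 1 : ℕ) : ℤ) = (m : ℤ) + 1 by push_cast; ring, itZ_add_one,
      Function.iterate_succ_apply]
    exact ih (T x)

lemma fwd_succ (n : ℕ) (x : Ω) :
    fwd T M (n + 1) x = M ((⇑T)^[n] x) * fwd T M n x := rfl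

lemma fwd_succ' (n : ℕ) (x : Ω) :
    fwd T M (n + 1) x = fwd T M n (T x) * M x := by
  induction n generalizing x with
  | zero => simp [fwd]
  | succ m ih =>
    rw [fwd_succ, ih, fwd_succ, Function.iterate_succ_apply, mul_assoc]

variable {M} (hdet : ∀ x, (M x).det = 1)
include hdet

lemma fwd_det (n : ℕ) (x : Ω) : (fwd T M n x).det = 1 := by
  induction n with
  | zero => simp [fwd]
  | succ m ih => rw [fwd_succ, Matrix.det_mul, hdet, ih, one_mul]

lemma fwd_isUnit_det (n : ℕ) (x : Ω) : IsUnit (fwd T M n x).det := by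
  rw [fwd_det T hdet]; exact isUnit_one

lemma cocZ_natCast (n : ℕ) (x : Ω) : cocZ T M (n : ℤ) x = fwd T M n x := by
  rw [cocZ, if_pos (by positivity), Int.toNat_natCast]

lemma cocZ_zero (x : Ω) : cocZ T M 0 x = 1 := by
  have := cocZ_natCast T hdet (M := M) 0 x
  simpa [fwd] using this

lemma cocZ_one (x : Ω) : cocZ T M 1 x = M x := by
  have := cocZ_natCast T hdet (M := M) 1 x
  simp only [Nat.cast_one] at this
  rw [this]
  show M ((⇑T)^[0] x) * fwd T M 0 x = M x
  simp [fwd]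

lemma cocZ_add_one (n : ℤ) (x : Ω) :
    cocZ T M (n + 1) x = cocZ T M n (T x) * M x := by
  rcases le_or_gt 0 n with hn | hn
  · rw [cocZ, if_pos (by omega), cocZ, if_pos hn,
      show (n + 1).toNat = n.toNat + 1 by omega, fwd_succ']
  · rcases eq_or_lt_of_le (show n + 1 ≤ 0 by omega) with h0 | hneg
    · -- n = -1
      have hn1 : n = -1 := by omega
      subst hn1
      rw [show (-1 : ℤ) + 1 = 0 from by ring, cocZ_zero T hdet, cocZ, if_neg (by omega)]
      have h1 : ((-(-1 : ℤ)).toNat) = 1 := by decide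
      rw [h1]
      have : fwd T M 1 ((⇑T.symm)^[1] (T x)) = M x := by
        show M ((⇑T)^[0] _) * fwd T M 0 _ = M x
        simp [fwd]
      rw [this, Matrix.nonsing_inv_mul _ (by rw [hdet]; exact isUnit_one)]
    · -- n + 1 < 0
      set k : ℕ := (-(n + 1)).toNat with hk
      have hkn : (-n).toNat = k + 1 := by omega
      have hk1 : (-(n+1)).toNat = k := rfl
      rw [cocZ, if_neg (by omega), cocZ, if_neg (by omega), hkn, hk1]
      have hy : (⇑T.symm)^[k + 1] (T x) = (⇑T.symm)^[k] x := by
        rw [Function.iterate_succ_apply, Homeomorph.symm_apply_apply]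
      rw [hy]
      set y := (⇑T.symm)^[k] x with hy'
      have hTy : (⇑T)^[k] y = x := by
        rw [hy']
        exact Function.LeftInverse.iterate (fun a => T.apply_symm_apply a) k x
      rw [fwd_succ, hTy, Matrix.mul_inv_rev, mul_assoc,
        Matrix.nonsing_inv_mul _ (by rw [hdet]; exact isUnit_one), mul_one]

lemma cocZ_sub_one (n : ℤ) (x : Ω) :
    cocZ T M (n - 1) x = cocZ T M n (T.symm x) * (M (T.symm x))⁻¹ := by
  have h := cocZ_add_one T hdet (n - 1) (T.symm x)
  rw [sub_add_cancel, Homeomorph.apply_symm_apply] at h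
  rw [h, mul_assoc, Matrix.mul_nonsing_inv _ (by rw [hdet]; exact isUnit_one), mul_one]

lemma cocZ_add (a b : ℤ) (x : Ω) :
    cocZ T M (a + b) x = cocZ T M a (itZ T b x) * cocZ T M b x := by
  induction b using Int.induction_on generalizing x with
  | zero => rw [add_zero, cocZ_zero T hdet, mul_one, itZ_zero]
  | succ b ih =>
    rw [show a + ((b : ℤ) + 1) = (a + b) + 1 by ring, cocZ_add_one T hdet,
      ih (T x), cocZ_add_one T hdet, itZ_add_one, mul_assoc]
  | pred b ih =>
    rw [show a + (-(b : ℤ) - 1) = (a + -b) - 1 by ring, cocZ_sub_one T hdet,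
      ih (T.symm x), cocZ_sub_one T hdet, itZ_sub_one, mul_assoc]

lemma cocZ_det (n : ℤ) (x : Ω) : (cocZ T M n x).det = 1 := by
  rw [cocZ]
  split_ifs
  · exact fwd_det T hdet _ _
  · rw [Matrix.det_nonsing_inv, fwd_det T hdet, Ring.inverse_one]

lemma cocZ_isUnit_det (n : ℤ) (x : Ω) : IsUnit (cocZ T M n x).det := by
  rw [cocZ_det T hdet]; exact isUnit_one

lemma cocZ_neg (b : ℤ) (x : Ω) :
    (cocZ T M b x)⁻¹ = cocZ T M (-b) (itZ T b x) := by
  have h := cocZ_add T hdet (-b) b x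
  rw [neg_add_cancel, cocZ_zero T hdet] at h
  have := Matrix.inv_eq_left_inv h.symm
  rw [this]

lemma cocZ_nonneg (n : ℤ) (hn : 0 ≤ n) (x : Ω) : cocZ T M n x = fwd T M n.toNat x := by
  rw [cocZ, if_pos hn]


end Dich


namespace Dich

/-- Rotation by 90 degrees. -/
def Jm : Matrix (Fin 2) (Fin 2) ℝ := Matrix.of ![![0, -1], ![1, 0]]

/-- Transpose of `Jm`. -/
def Jt : Matrix (Fin 2) (Fin 2) ℝ := Matrix.of ![![0, 1], ![-1, 0]]

/-- Orthogonal projection matrix onto the line spanned by `u`. -/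
def Qm (u : Fin 2 → ℝ) : Matrix (Fin 2) (Fin 2) ℝ :=
  (u 0 ^ 2 + u 1 ^ 2)⁻¹ • Matrix.of ![![u 0 * u 0, u 0 * u 1], ![u 1 * u 0, u 1 * u 1]]

lemma nsq_pos {u : Fin 2 → ℝ} (hu : u ≠ 0) : 0 < u 0 ^ 2 + u 1 ^ 2 := by
  rcases vec_ne_cases hu with h | h <;> positivity

lemma qaux {c : ℝ} (hc : c ≠ 0) (nu x y : ℝ) :
    ((c * c) * nu)⁻¹ * ((c * x) * (c * y)) = nu⁻¹ * (x * y) := by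
  by_cases h : nu = 0
  · simp [h]
  · field_simp

lemma Qm_smul {c : ℝ} (hc : c ≠ 0) (u : Fin 2 → ℝ) : Qm (c • u) = Qm u := by
  ext i j
  fin_cases i <;> fin_cases j <;>
    simp only [Qm, smul_fun_apply, Matrix.smul_apply, Matrix.of_apply, Fin.zero_eta,
      Fin.mk_one, Matrix.cons_val', Matrix.cons_val_zero, Matrix.cons_val_one,
      Matrix.head_cons, Matrix.head_fin_const, Matrix.empty_val',
      Matrix.cons_val_fin_one, smul_eq_mul] <;>
  · rw [show (c * u 0) ^ 2 + (c * u 1) ^ 2 = (c * c) * (u 0 ^ 2 + u 1 ^ 2) by ring]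
    exact qaux hc _ _ _

/-- The orthogonal-projection map on projective space. -/
def Qp : ℙ ℝ (Fin 2 → ℝ) → Matrix (Fin 2) (Fin 2) ℝ :=
  Projectivization.lift (fun w => Qm w.1)
    (by
      rintro ⟨a, ha⟩ ⟨b, hb⟩ t h
      simp only at h ⊢
      subst h
      have ht : t ≠ 0 := by rintro rfl; simp at ha
      exact Qm_smul ht b)

lemma Qp_mk {u : Fin 2 → ℝ} (hu : u ≠ 0) : Qp (Projectivization.mk ℝ u hu) = Qm u := rfl

lemma continuous_Qp : Continuous (Qp : ℙ ℝ (Fin 2 → ℝ) → Matrix (Fin 2) (Fin 2) ℝ) := by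
  apply continuous_quot_lift
  apply continuous_matrix
  intro i j
  have hcoord : ∀ k : Fin 2, Continuous fun w : {v : Fin 2 → ℝ // v ≠ 0} => w.1 k :=
    fun k => (continuous_apply k).comp continuous_subtype_val
  have hden : Continuous fun w : {v : Fin 2 → ℝ // v ≠ 0} => (w.1 0 ^ 2 + w.1 1 ^ 2)⁻¹ :=
    Continuous.inv₀ (by continuity) (fun w => (nsq_pos w.2).ne')
  fin_cases i <;> fin_cases j <;>
    simp only [Qm, Matrix.smul_apply, Matrix.of_apply, Fin.zero_eta, Fin.mk_one,
      Matrix.cons_val', Matrix.cons_val_zero, Matrix.cons_val_one, Matrix.head_cons,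
      Matrix.head_fin_const, Matrix.empty_val', Matrix.cons_val_fin_one, smul_eq_mul] <;>
    exact hden.mul ((hcoord _).mul (hcoord _))

lemma QJQJ (u v : Fin 2 → ℝ) :
    Qm u * Jm * Qm v * Jt =
      ((u 0 ^ 2 + u 1 ^ 2)⁻¹ * (v 0 ^ 2 + v 1 ^ 2)⁻¹ * dt u v) •
        Matrix.of ![![u 0 * v 1, -(u 0 * v 0)], ![u 1 * v 1, -(u 1 * v 0)]] := by
  ext i j
  fin_cases i <;> fin_cases j <;>
    simp [Qm, Jm, Jt, dt, Matrix.mul_apply, Fin.sum_univ_two] <;> ring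

lemma trace_QJQJ (u v : Fin 2 → ℝ) :
    Matrix.trace (Qm u * Jm * Qm v * Jt) =
      (u 0 ^ 2 + u 1 ^ 2)⁻¹ * (v 0 ^ 2 + v 1 ^ 2)⁻¹ * dt u v * dt u v := by
  rw [QJQJ, Matrix.trace_smul, Matrix.trace_fin_two]
  simp only [Matrix.of_apply, Matrix.cons_val', Matrix.cons_val_zero, Matrix.cons_val_one,
    Matrix.head_cons, Matrix.empty_val', Matrix.cons_val_fin_one, Matrix.head_fin_const,
    smul_eq_mul, dt]
  ring

lemma FQ_eq_Pm {u v : Fin 2 → ℝ} (hu : u ≠ 0) (hv : v ≠ 0) (hD : dt u v ≠ 0) :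
    (Matrix.trace (Qm u * Jm * Qm v * Jt))⁻¹ • (Qm u * Jm * Qm v * Jt) = Pm u v := by
  have hnu := (nsq_pos hu).ne'
  have hnv := (nsq_pos hv).ne'
  rw [trace_QJQJ, QJQJ, smul_smul, Pm]
  congr 1
  field_simp

/-- Uniqueness of an exponentially contracted direction for a family of
determinant-one matrices. -/
lemma contracted_unique {B : ℕ → Matrix (Fin 2) (Fin 2) ℝ} (hdet : ∀ n, (B n).det = 1)
    {a b : Fin 2 → ℝ} (ha : a ≠ 0) (hb : b ≠ 0) {β : ℝ} (hβ : 0 < β) {c₁ c₂ : ℝ}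
    (h₁ : ∀ n : ℕ, ‖(B n).mulVec a‖ ≤ c₁ * Real.exp (-β * n) * ‖a‖)
    (h₂ : ∀ n : ℕ, ‖(B n).mulVec b‖ ≤ c₂ * Real.exp (-β * n) * ‖b‖) :
    Projectivization.mk ℝ a ha = Projectivization.mk ℝ b hb := by
  rw [Projectivization.mk_eq_mk_iff', ← dt_eq_zero_iff ha hb]
  by_contra hD
  set r : ℝ := Real.exp (-β) with hr
  have hr0 : 0 < r := Real.exp_pos _
  have hr1 : r < 1 := Real.exp_lt_one_iff.2 (by linarith)
  have hexp : ∀ n : ℕ, Real.exp (-β * n) = r ^ n := by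
    intro n
    rw [hr, ← Real.exp_nat_mul]
    ring_nf
  have key : ∀ n : ℕ, |dt a b| ≤ 2 * c₁ * c₂ * ‖a‖ * ‖b‖ * (r ^ 2) ^ n := by
    intro n
    have h1n := h₁ n; have h2n := h₂ n
    have hB := dt_mulVec (B n) a b
    rw [hdet n, one_mul] at hB
    have hbd := abs_dt_le ((B n).mulVec a) ((B n).mulVec b)
    rw [hB] at hbd
    have hn1 : (0:ℝ) ≤ ‖(B n).mulVec a‖ := norm_nonneg _
    have hn2 : (0:ℝ) ≤ ‖(B n).mulVec b‖ := norm_nonneg _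
    have hc2 : (0:ℝ) ≤ c₂ * Real.exp (-β * n) * ‖b‖ := le_trans hn2 h2n
    calc |dt a b| ≤ 2 * ‖(B n).mulVec a‖ * ‖(B n).mulVec b‖ := hbd
      _ ≤ 2 * (c₁ * Real.exp (-β * n) * ‖a‖) * (c₂ * Real.exp (-β * n) * ‖b‖) := by
          have hc1 : (0:ℝ) ≤ c₁ * Real.exp (-β * n) * ‖a‖ := le_trans hn1 h1n
          nlinarith [mul_le_mul h1n h2n hn2 hc1]
      _ = 2 * c₁ * c₂ * ‖a‖ * ‖b‖ * (r ^ 2) ^ n := by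
          rw [hexp n]; ring
  have hlim : Filter.Tendsto (fun n : ℕ => 2 * c₁ * c₂ * ‖a‖ * ‖b‖ * (r ^ 2) ^ n)
      Filter.atTop (nhds 0) := by
    rw [show (0:ℝ) = 2 * c₁ * c₂ * ‖a‖ * ‖b‖ * 0 by ring]
    exact Filter.Tendsto.const_mul _
      (tendsto_pow_atTop_nhds_zero_of_lt_one (by positivity)
        (by nlinarith))
  have hpos : 0 < |dt a b| := abs_pos.2 hD
  obtain ⟨n, hn⟩ := (hlim.eventually (gt_mem_nhds hpos)).exists
  exact absurd (key n) (not_le.2 hn)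

lemma mem_submodule_iff {p : ℙ ℝ (Fin 2 → ℝ)} {w u : Fin 2 → ℝ} (hu : u ≠ 0)
    (hp : Projectivization.mk ℝ u hu = p) :
    w ∈ p.submodule ↔ ∃ c : ℝ, w = c • u := by
  subst hp
  rw [Projectivization.submodule_mk, Submodule.mem_span_singleton]
  exact ⟨fun ⟨c, hc⟩ => ⟨c, hc.symm⟩, fun ⟨c, hc⟩ => ⟨c, hc.symm⟩⟩

lemma ext_of_basis {a b : Fin 2 → ℝ} (hD : dt a b ≠ 0)
    {P₁ P₂ : Matrix (Fin 2) (Fin 2) ℝ}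
    (h₁ : P₁.mulVec a = P₂.mulVec a) (h₂ : P₁.mulVec b = P₂.mulVec b) : P₁ = P₂ := by
  apply matrix_ext_of_mulVec
  intro w
  have hw := decompose hD w
  rw [hw, Matrix.mulVec_add, Matrix.mulVec_smul, Matrix.mulVec_smul, h₁, h₂,
    ← Matrix.mulVec_smul, ← Matrix.mulVec_smul, ← Matrix.mulVec_add]

lemma Pm_congr {a b a' b' : Fin 2 → ℝ} (ha : a ≠ 0) (hb : b ≠ 0) (ha' : a' ≠ 0)
    (hb' : b' ≠ 0) (h1 : Projectivization.mk ℝ a ha = Projectivization.mk ℝ a' ha')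
    (h2 : Projectivization.mk ℝ b hb = Projectivization.mk ℝ b' hb') :
    Pm a b = Pm a' b' := by
  obtain ⟨c, hc⟩ := (Projectivization.mk_eq_mk_iff' ℝ _ _ ha ha').1 h1
  obtain ⟨d, hd⟩ := (Projectivization.mk_eq_mk_iff' ℝ _ _ hb hb').1 h2
  have hc0 : c ≠ 0 := by rintro rfl; rw [zero_smul] at hc; exact ha hc.symm
  have hd0 : d ≠ 0 := by rintro rfl; rw [zero_smul] at hd; exact hb hd.symm
  rw [← hc, ← hd, Pm_smul_left hc0, Pm_smul_right hd0]

lemma norm_inv_le {A : Matrix (Fin 2) (Fin 2) ℝ} (h : A.det = 1) : ‖A⁻¹‖ ≤ 4 * ‖A‖ := by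
  rw [Matrix.inv_def, h, Ring.inverse_one, one_smul]
  calc ‖A.adjugate‖ ≤ |A.adjugate 0 0| + |A.adjugate 0 1| + |A.adjugate 1 0| +
        |A.adjugate 1 1| := norm_mat_le _
    _ ≤ 4 * ‖A‖ := by
        rw [Matrix.adjugate_fin_two]
        simp [abs_neg]
        have := entry_le_norm A 0 0; have := entry_le_norm A 0 1
        have := entry_le_norm A 1 0; have := entry_le_norm A 1 1
        linarith

end Dich


namespace Dich

open LinearAlgebra.Projectivization Projectivization

section dyn

variable {Ω : Type*} [MetricSpace Ω] [CompactSpace Ω]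
  [MeasurableSpace Ω] [BorelSpace Ω]

variable (T : Ω ≃ₜ Ω) {M : Ω → Matrix (Fin 2) (Fin 2) ℝ} (hdet : ∀ x, (M x).det = 1)
variable {β' C' : ℝ} (hβ' : 0 < β') (hC' : 0 < C')
variable {U V : Ω → Projectivization ℝ (Fin 2 → ℝ)}
variable {KI : ℝ} (hKI1 : 1 ≤ KI) (hKI : ∀ x, ‖(M x)⁻¹‖ ≤ KI)

include hdet in
lemma mulVec_ne_zero {x : Ω} {a : Fin 2 → ℝ} (ha : a ≠ 0) : (M x).mulVec a ≠ 0 := by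
  intro h
  apply ha
  have h1 : ((M x)⁻¹ * M x).mulVec a = a := by
    rw [Matrix.nonsing_inv_mul _ (by rw [hdet x]; exact isUnit_one), Matrix.one_mulVec]
  rw [← h1, ← Matrix.mulVec_mulVec, h, Matrix.mulVec_zero]

include hdet hKI in
lemma norm_le_KI {x : Ω} (a : Fin 2 → ℝ) : ‖a‖ ≤ 2 * KI * ‖(M x).mulVec a‖ := by
  have h1 : ((M x)⁻¹ * M x).mulVec a = a := by
    rw [Matrix.nonsing_inv_mul _ (by rw [hdet x]; exact isUnit_one), Matrix.one_mulVec]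
  calc ‖a‖ = ‖((M x)⁻¹).mulVec ((M x).mulVec a)‖ := by rw [Matrix.mulVec_mulVec, h1]
    _ ≤ 2 * ‖(M x)⁻¹‖ * ‖(M x).mulVec a‖ := norm_mulVec_le _ _
    _ ≤ 2 * KI * ‖(M x).mulVec a‖ := by
        have := norm_nonneg ((M x).mulVec a)
        have := hKI x
        have := norm_nonneg ((M x)⁻¹)
        nlinarith

variable (hUest : ∀ x : Ω, ∀ u ∈ (U x).submodule, ∀ n : ℕ,
      ‖(fwd T M n x).mulVec u‖ ≤ C' * Real.exp (-β' * n) * ‖u‖)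
variable (hVest : ∀ x : Ω, ∀ v ∈ (V x).submodule, ∀ n : ℕ,
      ‖(cocZ T M (-(n : ℤ)) x).mulVec v‖ ≤ C' * Real.exp (-β' * n) * ‖v‖)

include T hdet hβ' hC' hKI1 hKI hUest in
lemma U_step {x : Ω} {a : Fin 2 → ℝ} (ha : a ≠ 0)
    (hmk : Projectivization.mk ℝ a ha = U x) :
    Projectivization.mk ℝ ((M x).mulVec a) (mulVec_ne_zero hdet ha) = U (T x) := by
  have hmem : a ∈ (U x).submodule := (mem_submodule_iff ha hmk).2 ⟨1, (one_smul _ _).symm⟩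
  have hmem' : (U (T x)).rep ∈ (U (T x)).submodule := by
    rw [Projectivization.submodule_eq]
    exact Submodule.mem_span_singleton_self _
  have key := contracted_unique (B := fun n => fwd T M n (T x))
    (fun n => fwd_det T hdet n (T x)) (mulVec_ne_zero hdet ha)
    (Projectivization.rep_nonzero (U (T x))) hβ'
    (c₁ := 2 * KI * C') (c₂ := C')
    (fun n => by
      have h1 : (fwd T M n (T x)).mulVec ((M x).mulVec a) = (fwd T M (n+1) x).mulVec a := by
        rw [Matrix.mulVec_mulVec, ← fwd_succ']
      rw [h1]
      have h2 := hUest x a hmem (n + 1)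
      have h3 : ‖a‖ ≤ 2 * KI * ‖(M x).mulVec a‖ := norm_le_KI hdet hKI a
      have hexp : Real.exp (-β' * ((n:ℝ)+1)) ≤ Real.exp (-β' * n) := by
        apply Real.exp_le_exp.2
        nlinarith
      have hexp0 : (0:ℝ) < Real.exp (-β' * ((n:ℝ)+1)) := Real.exp_pos _
      have hexp1 : (0:ℝ) < Real.exp (-β' * (n:ℝ)) := Real.exp_pos _
      calc ‖(fwd T M (n+1) x).mulVec a‖ ≤ C' * Real.exp (-β' * ((n:ℕ)+1:ℕ)) * ‖a‖ := h2
        _ = C' * Real.exp (-β' * ((n:ℝ)+1)) * ‖a‖ := by push_cast; ring_nf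
        _ ≤ C' * Real.exp (-β' * (n:ℝ)) * (2 * KI * ‖(M x).mulVec a‖) := by
            have h0 : (0:ℝ) ≤ ‖a‖ := norm_nonneg _
            have h4 : (0:ℝ) ≤ 2 * KI * ‖(M x).mulVec a‖ := by
              have := norm_nonneg ((M x).mulVec a); nlinarith
            have := mul_le_mul (mul_le_mul le_rfl hexp hexp0.le hC'.le) (h3.trans le_rfl) h0 (by positivity)
            linarith [this]
        _ = 2 * KI * C' * Real.exp (-β' * n) * ‖(M x).mulVec a‖ := by ring)
    (fun n => hUest (T x) _ hmem' n)
  rw [key, Projectivization.mk_rep]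

include T hdet hβ' hC' hKI1 hKI hVest in
lemma V_step {x : Ω} {a : Fin 2 → ℝ} (ha : a ≠ 0)
    (hmk : Projectivization.mk ℝ a ha = V x) :
    Projectivization.mk ℝ ((M x).mulVec a) (mulVec_ne_zero hdet ha) = V (T x) := by
  have hmem : a ∈ (V x).submodule := (mem_submodule_iff ha hmk).2 ⟨1, (one_smul _ _).symm⟩
  have hmem' : (V (T x)).rep ∈ (V (T x)).submodule := by
    rw [Projectivization.submodule_eq]
    exact Submodule.mem_span_singleton_self _
  have hb1 : ∀ n : ℕ, ‖(cocZ T M (-(n:ℤ)) (T x)).mulVec ((M x).mulVec a)‖ ≤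
      (2 * KI * C' * Real.exp β' + 1) * Real.exp (-β' * n) * ‖(M x).mulVec a‖ := by
    intro n
    match n with
    | 0 =>
      have h0 : cocZ T M (-(0:ℕ):ℤ) (T x) = 1 := by
        rw [show (-(0:ℕ):ℤ) = 0 by norm_num, cocZ_zero T hdet]
      rw [h0, Matrix.one_mulVec]
      have hexp : Real.exp (-β' * ((0:ℕ):ℝ)) = 1 := by norm_num
      rw [hexp]
      have h1 : (0:ℝ) ≤ 2 * KI * C' * Real.exp β' := by positivity
      nlinarith [norm_nonneg ((M x).mulVec a)]
    | Nat.succ m =>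
      have hid : cocZ T M (-(m:ℤ)) x = cocZ T M (-((m+1:ℕ)):ℤ) (T x) * M x := by
        have h := cocZ_add T hdet (-((m+1:ℕ)):ℤ) 1 x
        rw [cocZ_one T hdet] at h
        have h1 : itZ T 1 x = T x := by
          have := itZ_natCast T (1:ℕ) x
          simpa using this
        rw [h1] at h
        rw [show (-(m:ℤ)) = (-((m+1:ℕ)):ℤ) + 1 by push_cast; ring, h]
      have h2 : (cocZ T M (-((m+1:ℕ)):ℤ) (T x)).mulVec ((M x).mulVec a)
          = (cocZ T M (-(m:ℤ)) x).mulVec a := by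
        rw [Matrix.mulVec_mulVec, ← hid]
      rw [show (-((Nat.succ m : ℕ)):ℤ) = (-((m+1:ℕ)):ℤ) by push_cast; ring, h2]
      have h3 := hVest x a hmem m
      have h4 : ‖a‖ ≤ 2 * KI * ‖(M x).mulVec a‖ := norm_le_KI hdet hKI a
      have hexp : Real.exp (-β' * (m:ℝ)) = Real.exp β' * Real.exp (-β' * ((m:ℝ)+1)) := by
        rw [← Real.exp_add]; ring_nf
      have hexp1 : (0:ℝ) < Real.exp (-β' * ((m:ℝ)+1)) := Real.exp_pos _
      have hnn : (0:ℝ) ≤ ‖(M x).mulVec a‖ := norm_nonneg _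
      have hna : (0:ℝ) ≤ ‖a‖ := norm_nonneg _
      calc ‖(cocZ T M (-(m:ℤ)) x).mulVec a‖ ≤ C' * Real.exp (-β' * m) * ‖a‖ := h3
        _ ≤ C' * (Real.exp β' * Real.exp (-β' * ((m:ℝ)+1))) * (2 * KI * ‖(M x).mulVec a‖) := by
            rw [← hexp]
            have hexp2 : (0:ℝ) < Real.exp (-β' * (m:ℝ)) := Real.exp_pos _
            nlinarith [mul_le_mul_of_nonneg_left h4
              (by positivity : (0:ℝ) ≤ C' * Real.exp (-β' * (m:ℝ)))]
        _ ≤ (2 * KI * C' * Real.exp β' + 1) * Real.exp (-β' * ((Nat.succ m : ℕ):ℝ)) *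
              ‖(M x).mulVec a‖ := by
            push_cast
            nlinarith [Real.exp_pos (-β' * ((m:ℝ)+1))]
  have key := contracted_unique (B := fun n => cocZ T M (-(n:ℤ)) (T x))
    (fun n => cocZ_det T hdet _ _) (mulVec_ne_zero hdet ha)
    (Projectivization.rep_nonzero (V (T x))) hβ'
    (c₁ := 2 * KI * C' * Real.exp β' + 1) (c₂ := C')
    hb1 (fun n => hVest (T x) _ hmem' n)
  rw [key, Projectivization.mk_rep]

include T hdet hβ' hC' hKI1 hKI hUest hVest in
lemma U_ne_V (x : Ω) : U x ≠ V x := by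
  intro heq
  set u : Fin 2 → ℝ := (U x).rep with hu_def
  have hu : u ≠ 0 := Projectivization.rep_nonzero (U x)
  have hmkU : Projectivization.mk ℝ u hu = U x := Projectivization.mk_rep (U x)
  have hmkV : Projectivization.mk ℝ u hu = V x := by rw [hmkU, heq]
  -- iterated invariance of V
  have Viter : ∀ n : ℕ, ∃ h : (fwd T M n x).mulVec u ≠ 0,
      Projectivization.mk ℝ _ h = V ((⇑T)^[n] x) := by
    intro n
    induction n with
    | zero =>
      refine ⟨by simpa [fwd, Matrix.one_mulVec] using hu, ?_⟩
      simp only [Function.iterate_zero, id_eq]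
      have : (fwd T M 0 x).mulVec u = u := by simp [fwd, Matrix.one_mulVec]
      rw [show Projectivization.mk ℝ ((fwd T M 0 x).mulVec u) _ =
        Projectivization.mk ℝ u hu from by congr 1 <;> simp [fwd, Matrix.one_mulVec]]
      exact hmkV
    | succ m ih =>
      obtain ⟨hm, hmk⟩ := ih
      have hstep := V_step T hdet hβ' hC' hKI1 hKI hVest hm hmk
      have heqv : (M ((⇑T)^[m] x)).mulVec ((fwd T M m x).mulVec u)
          = (fwd T M (m+1) x).mulVec u := by
        rw [Matrix.mulVec_mulVec]; rfl
      refine ⟨by rw [← heqv]; exact mulVec_ne_zero hdet hm, ?_⟩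
      rw [show Projectivization.mk ℝ ((fwd T M (m+1) x).mulVec u) _ =
        Projectivization.mk ℝ ((M ((⇑T)^[m] x)).mulVec ((fwd T M m x).mulVec u))
          (mulVec_ne_zero hdet hm) from by congr 1 <;> rw [heqv]]
      rw [hstep, ← Function.iterate_succ_apply' (⇑T) m x]
  -- contraction estimate
  have humem : u ∈ (U x).submodule := (mem_submodule_iff hu hmkU).2 ⟨1, (one_smul _ _).symm⟩
  have key : ∀ n : ℕ, ‖u‖ ≤ C' * C' * ((Real.exp (-β') ^ 2) ^ n) * ‖u‖ := by
    intro n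
    obtain ⟨hn, hmkn⟩ := Viter n
    have hmemn : (fwd T M n x).mulVec u ∈ (V ((⇑T)^[n] x)).submodule :=
      (mem_submodule_iff hn hmkn).2 ⟨1, (one_smul _ _).symm⟩
    have h2 := hVest ((⇑T)^[n] x) _ hmemn n
    have h1 := hUest x u humem n
    have hinv : (cocZ T M (-(n:ℤ)) ((⇑T)^[n] x)).mulVec ((fwd T M n x).mulVec u) = u := by
      rw [Matrix.mulVec_mulVec]
      have hitz : itZ T (n:ℤ) x = (⇑T)^[n] x := itZ_natCast T n x
      have hadd := cocZ_add T hdet (-(n:ℤ)) (n:ℤ) x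
      rw [neg_add_cancel, cocZ_zero T hdet, hitz, cocZ_natCast T hdet] at hadd
      rw [← hadd, Matrix.one_mulVec]
    rw [hinv] at h2
    have hexp : Real.exp (-β' * (n:ℝ)) = Real.exp (-β') ^ n := by
      rw [← Real.exp_nat_mul]; ring_nf
    calc ‖u‖ ≤ C' * Real.exp (-β' * n) * ‖(fwd T M n x).mulVec u‖ := h2
      _ ≤ C' * Real.exp (-β' * n) * (C' * Real.exp (-β' * n) * ‖u‖) := by
          have : (0:ℝ) ≤ C' * Real.exp (-β' * (n:ℝ)) := by positivity
          nlinarith [h1]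
      _ = C' * C' * ((Real.exp (-β') ^ 2) ^ n) * ‖u‖ := by
          rw [hexp]; ring
  have hupos : 0 < ‖u‖ := norm_pos_iff.2 hu
  have hr1 : Real.exp (-β') < 1 := Real.exp_lt_one_iff.2 (by linarith)
  have hr0 : 0 < Real.exp (-β') := Real.exp_pos _
  have hlim : Filter.Tendsto (fun n : ℕ => C' * C' * ((Real.exp (-β') ^ 2) ^ n) * ‖u‖)
      Filter.atTop (nhds 0) := by
    rw [show (0:ℝ) = C' * C' * 0 * ‖u‖ by ring]
    apply Filter.Tendsto.mul_const
    exact Filter.Tendsto.const_mul _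
      (tendsto_pow_atTop_nhds_zero_of_lt_one (by positivity) (by nlinarith))
  obtain ⟨n, hn⟩ := (hlim.eventually (gt_mem_nhds hupos)).exists
  exact absurd (key n) (not_le.2 hn)

end dyn

end Dich

namespace Dich

lemma norm_one_le : ‖(1 : Matrix (Fin 2) (Fin 2) ℝ)‖ ≤ 2 := by
  rw [norm_mat_eq]
  have h00 : (1 : Matrix (Fin 2) (Fin 2) ℝ) 0 0 = 1 := Matrix.one_apply_eq _
  have h11 : (1 : Matrix (Fin 2) (Fin 2) ℝ) 1 1 = 1 := Matrix.one_apply_eq _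
  have h01 : (1 : Matrix (Fin 2) (Fin 2) ℝ) 0 1 = 0 := Matrix.one_apply_ne (by decide)
  have h10 : (1 : Matrix (Fin 2) (Fin 2) ℝ) 1 0 = 0 := Matrix.one_apply_ne (by decide)
  rw [h00, h01, h10, h11]
  have : Real.sqrt ((1:ℝ)^2 + 0^2 + (0^2 + 1^2)) ≤ Real.sqrt (2^2) := by
    apply Real.sqrt_le_sqrt; norm_num
  rw [Real.sqrt_sq (by norm_num : (0:ℝ) ≤ 2)] at this
  exact this

end Dich

open Dich in
/-- for a continuous `SL(2,ℝ)`-cocycle over a uniquely ergodic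
homeomorphism of a compact metric space, the existence of continuous contracted
directions (iii) implies exponential dichotomy (ii). -/
theorem dichotomy_of_directions
    (T : Ω ≃ₜ Ω) (hT : UniquelyErgodic T)
    (M : Ω → Matrix (Fin 2) (Fin 2) ℝ) (hM : Continuous M)
    (hdet : ∀ x, (M x).det = 1)
    (U V : Ω → Projectivization ℝ (Fin 2 → ℝ)) (hU : Continuous U) (hV : Continuous V)
    (C' : ℝ) (hC' : 0 < C') (β' : ℝ) (hβ' : 0 < β')
    (hUest : ∀ x : Ω, ∀ u ∈ (U x).submodule, ∀ n : ℕ,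
      ‖(fwd T M n x).mulVec u‖ ≤ C' * Real.exp (-β' * n) * ‖u‖)
    (hVest : ∀ x : Ω, ∀ v ∈ (V x).submodule, ∀ n : ℕ,
      ‖(cocZ T M (-(n : ℤ)) x).mulVec v‖ ≤ C' * Real.exp (-β' * n) * ‖v‖) :
    ∃ P : Ω → Matrix (Fin 2) (Fin 2) ℝ, Continuous P ∧ (∀ x, P x * P x = P x) ∧
      ∃ C > (0 : ℝ), ∃ β > (0 : ℝ),
        (∀ x : Ω, ∀ n m : ℤ, m ≤ n →
          ‖cocZ T M n x * P x * (cocZ T M m x)⁻¹‖ ≤ C * Real.exp (-β * (n - m))) ∧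
        (∀ x : Ω, ∀ n m : ℤ, n ≤ m →
          ‖cocZ T M n x * (1 - P x) * (cocZ T M m x)⁻¹‖ ≤ C * Real.exp (-β * (m - n))) := by
  classical
  obtain ⟨KM0, hKM0⟩ := IsCompact.exists_bound_of_continuousOn isCompact_univ hM.continuousOn
  set KI : ℝ := max 1 (4 * KM0) with hKI_def
  have hKI1 : 1 ≤ KI := le_max_left _ _
  have hKI : ∀ x, ‖(M x)⁻¹‖ ≤ KI := fun x => by
    have h1 := Dich.norm_inv_le (hdet x)
    have h2 := hKM0 x (Set.mem_univ x)
    have h3 : 4 * ‖M x‖ ≤ 4 * KM0 := by linarith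
    exact le_trans h1 (le_trans h3 (le_max_right _ _))
  have hne : ∀ x, U x ≠ V x := fun x =>
    Dich.U_ne_V T hdet hβ' hC' hKI1 hKI hUest hVest x
  have hD : ∀ x, Dich.dt (U x).rep (V x).rep ≠ 0 := fun x h => by
    apply hne x
    have h1 := (Dich.dt_eq_zero_iff (Projectivization.rep_nonzero (U x))
      (Projectivization.rep_nonzero (V x))).1 h
    have hmk := (Projectivization.mk_eq_mk_iff' ℝ _ _ (Projectivization.rep_nonzero (U x))
      (Projectivization.rep_nonzero (V x))).2 h1
    rwa [Projectivization.mk_rep, Projectivization.mk_rep] at hmk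
  set P : Ω → Matrix (Fin 2) (Fin 2) ℝ := fun x => Dich.Pm (U x).rep (V x).rep with hP_def
  -- continuity
  have hQpU : ∀ x, Dich.Qp (U x) = Dich.Qm (U x).rep := fun x => by
    conv_lhs => rw [← Projectivization.mk_rep (U x)]
    exact Dich.Qp_mk _
  have hQpV : ∀ x, Dich.Qp (V x) = Dich.Qm (V x).rep := fun x => by
    conv_lhs => rw [← Projectivization.mk_rep (V x)]
    exact Dich.Qp_mk _
  have hPeq : ∀ x, P x =
      (Matrix.trace (Dich.Qp (U x) * Dich.Jm * Dich.Qp (V x) * Dich.Jt))⁻¹ •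
        (Dich.Qp (U x) * Dich.Jm * Dich.Qp (V x) * Dich.Jt) := fun x => by
    rw [hQpU x, hQpV x, Dich.FQ_eq_Pm (Projectivization.rep_nonzero (U x))
      (Projectivization.rep_nonzero (V x)) (hD x)]
  have htr0 : ∀ x,
      Matrix.trace (Dich.Qp (U x) * Dich.Jm * Dich.Qp (V x) * Dich.Jt) ≠ 0 := fun x => by
    rw [hQpU x, hQpV x, Dich.trace_QJQJ]
    have h1 := Dich.nsq_pos (Projectivization.rep_nonzero (U x))
    have h2 := Dich.nsq_pos (Projectivization.rep_nonzero (V x))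
    exact mul_ne_zero (mul_ne_zero (mul_ne_zero (inv_ne_zero h1.ne') (inv_ne_zero h2.ne'))
      (hD x)) (hD x)
  have hQU : Continuous fun x => Dich.Qp (U x) := Dich.continuous_Qp.comp hU
  have hQV : Continuous fun x => Dich.Qp (V x) := Dich.continuous_Qp.comp hV
  have hR : Continuous fun x => Dich.Qp (U x) * Dich.Jm * Dich.Qp (V x) * Dich.Jt :=
    ((hQU.matrix_mul continuous_const).matrix_mul hQV).matrix_mul continuous_const
  have hPcont : Continuous P := by
    rw [show P = fun x =>
      (Matrix.trace (Dich.Qp (U x) * Dich.Jm * Dich.Qp (V x) * Dich.Jt))⁻¹ •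
        (Dich.Qp (U x) * Dich.Jm * Dich.Qp (V x) * Dich.Jt) from funext hPeq]
    exact (hR.matrix_trace.inv₀ htr0).smul hR
  -- conjugation invariance
  have hud : ∀ z, IsUnit (M z).det := fun z => by rw [hdet z]; exact isUnit_one
  have hudc : ∀ (k : ℤ) z, IsUnit (cocZ T M k z).det := fun k z => by
    rw [Dich.cocZ_det T hdet]; exact isUnit_one
  have conj_step : ∀ z, M z * P z * (M z)⁻¹ = P (T z) := by
    intro z
    have hu0 := Projectivization.rep_nonzero (U z)
    have hv0 := Projectivization.rep_nonzero (V z)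
    have ha : (M z).mulVec (U z).rep ≠ 0 := Dich.mulVec_ne_zero hdet hu0
    have hb : (M z).mulVec (V z).rep ≠ 0 := Dich.mulVec_ne_zero hdet hv0
    have hmka := Dich.U_step T hdet hβ' hC' hKI1 hKI hUest hu0 (Projectivization.mk_rep (U z))
    have hmkb := Dich.V_step T hdet hβ' hC' hKI1 hKI hVest hv0 (Projectivization.mk_rep (V z))
    have hdtab : Dich.dt ((M z).mulVec (U z).rep) ((M z).mulVec (V z).rep) ≠ 0 := by
      rw [Dich.dt_mulVec, hdet z, one_mul]; exact hD z
    have hPT : P (T z) = Dich.Pm ((M z).mulVec (U z).rep) ((M z).mulVec (V z).rep) :=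
      (Dich.Pm_congr ha hb (Projectivization.rep_nonzero (U (T z)))
        (Projectivization.rep_nonzero (V (T z)))
        (hmka.trans (Projectivization.mk_rep (U (T z))).symm)
        (hmkb.trans (Projectivization.mk_rep (V (T z))).symm)).symm
    have hMiM : ∀ w : Fin 2 → ℝ, ((M z)⁻¹).mulVec ((M z).mulVec w) = w := fun w => by
      rw [Matrix.mulVec_mulVec, Matrix.nonsing_inv_mul _ (hud z), Matrix.one_mulVec]
    apply Dich.ext_of_basis hdtab
    · rw [← Matrix.mulVec_mulVec, ← Matrix.mulVec_mulVec, hMiM,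
        Dich.Pm_mulVec_left (hD z), hPT, Dich.Pm_mulVec_left hdtab]
    · rw [← Matrix.mulVec_mulVec, ← Matrix.mulVec_mulVec, hMiM,
        Dich.Pm_mulVec_right, Matrix.mulVec_zero, hPT, Dich.Pm_mulVec_right]
  have conj_step' : ∀ z, (M z)⁻¹ * P (T z) * M z = P z := fun z => by
    rw [← conj_step z]
    have h1 : (M z)⁻¹ * M z = 1 := Matrix.nonsing_inv_mul _ (hud z)
    calc (M z)⁻¹ * (M z * P z * (M z)⁻¹) * M z
        = ((M z)⁻¹ * M z) * P z * ((M z)⁻¹ * M z) := by noncomm_ring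
      _ = P z := by rw [h1, one_mul, mul_one]
  have coc_conj : ∀ k : ℤ, ∀ z, cocZ T M k z * P z * (cocZ T M k z)⁻¹ = P (Dich.itZ T k z) := by
    intro k
    induction k using Int.induction_on with
    | zero =>
      intro z
      rw [Dich.cocZ_zero T hdet, Dich.itZ_zero]
      simp
    | succ k ih =>
      intro z
      rw [Dich.cocZ_add_one T hdet, Matrix.mul_inv_rev]
      calc (cocZ T M k (T z) * M z) * P z * ((M z)⁻¹ * (cocZ T M k (T z))⁻¹)
          = cocZ T M k (T z) * (M z * P z * (M z)⁻¹) * (cocZ T M k (T z))⁻¹ := by noncomm_ring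
        _ = cocZ T M k (T z) * P (T z) * (cocZ T M k (T z))⁻¹ := by rw [conj_step]
        _ = P (Dich.itZ T k (T z)) := ih (T z)
        _ = P (Dich.itZ T ((k:ℤ)+1) z) := by rw [Dich.itZ_add_one]
    | pred k ih =>
      intro z
      have hstep := Dich.cocZ_sub_one T hdet (-(k:ℤ)) z
      rw [hstep, Matrix.mul_inv_rev,
        Matrix.nonsing_inv_nonsing_inv _ (hud (T.symm z))]
      have hPz : (M (T.symm z))⁻¹ * P z * M (T.symm z) = P (T.symm z) := by
        have h := conj_step' (T.symm z)
        rwa [Homeomorph.apply_symm_apply] at h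
      calc (cocZ T M (-(k:ℤ)) (T.symm z) * (M (T.symm z))⁻¹) * P z *
              (M (T.symm z) * (cocZ T M (-(k:ℤ)) (T.symm z))⁻¹)
          = cocZ T M (-(k:ℤ)) (T.symm z) * ((M (T.symm z))⁻¹ * P z * M (T.symm z)) *
              (cocZ T M (-(k:ℤ)) (T.symm z))⁻¹ := by noncomm_ring
        _ = cocZ T M (-(k:ℤ)) (T.symm z) * P (T.symm z) *
              (cocZ T M (-(k:ℤ)) (T.symm z))⁻¹ := by rw [hPz]
        _ = P (Dich.itZ T (-(k:ℤ)) (T.symm z)) := ih (T.symm z)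
        _ = P (Dich.itZ T (-(k:ℤ)-1) z) := by rw [← Dich.itZ_sub_one]
  -- uniform bound on P
  obtain ⟨KP0, hKP0⟩ := IsCompact.exists_bound_of_continuousOn isCompact_univ
    hPcont.continuousOn
  set KP : ℝ := max 1 KP0 with hKP_def
  have hKP1 : (1:ℝ) ≤ KP := le_max_left _ _
  have hKP : ∀ x, ‖P x‖ ≤ KP := fun x =>
    le_trans (hKP0 x (Set.mem_univ x)) (le_max_right _ _)
  -- the two basic estimates
  have est1 : ∀ (y : Ω) (k : ℤ), 0 ≤ k →
      ‖cocZ T M k y * P y‖ ≤ 8 * (C' * KP) * Real.exp (-β' * (k:ℝ)) := by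
    intro y k hk
    have hcast : ((k.toNat : ℕ) : ℝ) = (k : ℝ) := by
      have := Int.toNat_of_nonneg hk
      exact_mod_cast this
    have hmv : ∀ w, ‖(cocZ T M k y * P y).mulVec w‖ ≤
        (2 * (C' * KP) * Real.exp (-β' * (k:ℝ))) * ‖w‖ := by
      intro w
      rw [← Matrix.mulVec_mulVec]
      have hmem : (P y).mulVec w ∈ (U y).submodule := by
        rw [Projectivization.submodule_eq, Submodule.mem_span_singleton]
        exact ⟨(Dich.dt (U y).rep (V y).rep)⁻¹ * Dich.dt w (V y).rep,
          (Dich.Pm_mulVec _ _ _).symm⟩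
      have h1 := hUest y _ hmem k.toNat
      rw [Dich.cocZ_nonneg T hdet k hk]
      have h2 : ‖(P y).mulVec w‖ ≤ 2 * KP * ‖w‖ := by
        have h3 := Dich.norm_mulVec_le (P y) w
        have h4 := hKP y
        have := norm_nonneg w
        nlinarith
      have hexp0 : (0:ℝ) < Real.exp (-β' * (k:ℝ)) := Real.exp_pos _
      calc ‖(fwd T M k.toNat y).mulVec ((P y).mulVec w)‖
          ≤ C' * Real.exp (-β' * ((k.toNat : ℕ):ℝ)) * ‖(P y).mulVec w‖ := h1
        _ = C' * Real.exp (-β' * (k:ℝ)) * ‖(P y).mulVec w‖ := by rw [hcast]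
        _ ≤ C' * Real.exp (-β' * (k:ℝ)) * (2 * KP * ‖w‖) := by
            have : (0:ℝ) ≤ C' * Real.exp (-β' * (k:ℝ)) := by positivity
            nlinarith [norm_nonneg ((P y).mulVec w)]
        _ = (2 * (C' * KP) * Real.exp (-β' * (k:ℝ))) * ‖w‖ := by ring
    have h5 := Dich.norm_le_of_mulVec_le hmv
    calc ‖cocZ T M k y * P y‖ ≤ 4 * (2 * (C' * KP) * Real.exp (-β' * (k:ℝ))) := h5
      _ = 8 * (C' * KP) * Real.exp (-β' * (k:ℝ)) := by ring
  have est2 : ∀ (y : Ω) (k : ℤ), k ≤ 0 →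
      ‖cocZ T M k y * (1 - P y)‖ ≤ 8 * (C' * (2 + KP)) * Real.exp (β' * (k:ℝ)) := by
    intro y k hk
    have hcast : (((-k).toNat : ℕ) : ℝ) = -(k : ℝ) := by
      have := Int.toNat_of_nonneg (by omega : (0:ℤ) ≤ -k)
      exact_mod_cast this
    have hkeq : cocZ T M k y = cocZ T M (-(((-k).toNat : ℕ) : ℤ)) y := by
      rw [Int.toNat_of_nonneg (by omega : (0:ℤ) ≤ -k), neg_neg]
    have hmv : ∀ w, ‖(cocZ T M k y * (1 - P y)).mulVec w‖ ≤
        (2 * (C' * (2 + KP)) * Real.exp (β' * (k:ℝ))) * ‖w‖ := by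
      intro w
      rw [← Matrix.mulVec_mulVec]
      have hmem : (1 - P y).mulVec w ∈ (V y).submodule := by
        rw [Projectivization.submodule_eq, Submodule.mem_span_singleton]
        exact ⟨(Dich.dt (U y).rep (V y).rep)⁻¹ * Dich.dt (U y).rep w,
          (Dich.one_sub_Pm_mulVec (hD y) w).symm⟩
      have h1 := hVest y _ hmem (-k).toNat
      rw [hkeq]
      have h2 : ‖(1 - P y).mulVec w‖ ≤ 2 * (2 + KP) * ‖w‖ := by
        have h3 := Dich.norm_mulVec_le (1 - P y) w
        have h4 : ‖(1 : Matrix (Fin 2) (Fin 2) ℝ) - P y‖ ≤ 2 + KP := by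
          calc ‖(1 : Matrix (Fin 2) (Fin 2) ℝ) - P y‖ ≤
              ‖(1 : Matrix (Fin 2) (Fin 2) ℝ)‖ + ‖P y‖ := norm_sub_le _ _
            _ ≤ 2 + KP := add_le_add Dich.norm_one_le (hKP y)
        have := norm_nonneg w
        nlinarith
      have hexp : Real.exp (-β' * (((-k).toNat : ℕ):ℝ)) = Real.exp (β' * (k:ℝ)) := by
        rw [hcast]; ring_nf
      calc ‖(cocZ T M (-(((-k).toNat : ℕ) : ℤ)) y).mulVec ((1 - P y).mulVec w)‖
          ≤ C' * Real.exp (-β' * (((-k).toNat : ℕ):ℝ)) * ‖(1 - P y).mulVec w‖ := h1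
        _ = C' * Real.exp (β' * (k:ℝ)) * ‖(1 - P y).mulVec w‖ := by rw [hexp]
        _ ≤ C' * Real.exp (β' * (k:ℝ)) * (2 * (2 + KP) * ‖w‖) := by
            have : (0:ℝ) ≤ C' * Real.exp (β' * (k:ℝ)) := by positivity
            nlinarith [norm_nonneg ((1 - P y).mulVec w)]
        _ = (2 * (C' * (2 + KP)) * Real.exp (β' * (k:ℝ))) * ‖w‖ := by ring
    have h5 := Dich.norm_le_of_mulVec_le hmv
    calc ‖cocZ T M k y * (1 - P y)‖
        ≤ 4 * (2 * (C' * (2 + KP)) * Real.exp (β' * (k:ℝ))) := h5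
      _ = 8 * (C' * (2 + KP)) * Real.exp (β' * (k:ℝ)) := by ring
  refine ⟨P, hPcont, fun x => Dich.Pm_idem (hD x), 8 * (C' * (2 + KP)),
    by positivity, β', hβ', ?_, ?_⟩
  · intro x n m hmn
    have hy : cocZ T M n x = cocZ T M (n - m) (Dich.itZ T m x) * cocZ T M m x := by
      have h := Dich.cocZ_add T hdet (n - m) m x
      rwa [show n - m + m = n by ring] at h
    have hconj := coc_conj m x
    have key : cocZ T M n x * P x * (cocZ T M m x)⁻¹ =
        cocZ T M (n - m) (Dich.itZ T m x) * P (Dich.itZ T m x) := by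
      rw [hy]
      calc (cocZ T M (n - m) (Dich.itZ T m x) * cocZ T M m x) * P x * (cocZ T M m x)⁻¹
          = cocZ T M (n - m) (Dich.itZ T m x) *
              (cocZ T M m x * P x * (cocZ T M m x)⁻¹) := by noncomm_ring
        _ = cocZ T M (n - m) (Dich.itZ T m x) * P (Dich.itZ T m x) := by rw [hconj]
    rw [key]
    have h6 := est1 (Dich.itZ T m x) (n - m) (by omega)
    have hcast : ((n - m : ℤ):ℝ) = (n:ℝ) - (m:ℝ) := by push_cast; ring
    rw [hcast] at h6
    refine le_trans h6 ?_
    have hexp0 : (0:ℝ) < Real.exp (-β' * ((n:ℝ) - (m:ℝ))) := Real.exp_pos _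
    nlinarith
  · intro x n m hnm
    have hy : cocZ T M n x = cocZ T M (n - m) (Dich.itZ T m x) * cocZ T M m x := by
      have h := Dich.cocZ_add T hdet (n - m) m x
      rwa [show n - m + m = n by ring] at h
    have hconj := coc_conj m x
    have hinv : cocZ T M m x * (cocZ T M m x)⁻¹ = 1 :=
      Matrix.mul_nonsing_inv _ (hudc m x)
    have hconj1 : cocZ T M m x * (1 - P x) * (cocZ T M m x)⁻¹ = 1 - P (Dich.itZ T m x) := by
      have hexpand : cocZ T M m x * (1 - P x) * (cocZ T M m x)⁻¹ =
          cocZ T M m x * (cocZ T M m x)⁻¹ - cocZ T M m x * P x * (cocZ T M m x)⁻¹ := by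
        noncomm_ring
      rw [hexpand, hinv, hconj]
    have key : cocZ T M n x * (1 - P x) * (cocZ T M m x)⁻¹ =
        cocZ T M (n - m) (Dich.itZ T m x) * (1 - P (Dich.itZ T m x)) := by
      rw [hy]
      calc (cocZ T M (n - m) (Dich.itZ T m x) * cocZ T M m x) * (1 - P x) *
              (cocZ T M m x)⁻¹
          = cocZ T M (n - m) (Dich.itZ T m x) *
              (cocZ T M m x * (1 - P x) * (cocZ T M m x)⁻¹) := by noncomm_ring
        _ = cocZ T M (n - m) (Dich.itZ T m x) * (1 - P (Dich.itZ T m x)) := by rw [hconj1]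
    rw [key]
    have h6 := est2 (Dich.itZ T m x) (n - m) (by omega)
    have hcast : ((n - m : ℤ):ℝ) = (n:ℝ) - (m:ℝ) := by push_cast; ring
    rw [hcast] at h6
    refine le_trans h6 ?_
    have heq : β' * ((n:ℝ) - (m:ℝ)) = -β' * ((m:ℝ) - (n:ℝ)) := by ring
    rw [heq]


end
end

section
/- Suppose Ω is a compact metric space, T a homeomorphism of Ω, and A : Ω → SL(2,ℝ) is continuous. Assume there exist a continuous map P from Ω to the projections on ℝ² and constants C, β > 0 such that ‖A(n,ω) P(ω) A(m,ω)^{−1}‖ ≤ C e^{−β(n−m)} for all n ≥ m and ‖A(n,ω)(1 − P(ω)) A(m,ω)^{−1}‖ ≤ C e^{−β(m−n)} for all n ≤ m. Then, with U(ω) = Range P(ω) and V(ω) = Range(1 − P(ω)), the maps U, V : Ω → ℙℝ² are continuous and there exist constants C̃, β̃ > 0 such that ‖A(n,ω)u‖ ≤ C̃ e^{−β̃ n}‖u‖ for all n ≥ 0 and u ∈ U(ω), and ‖A(−n,ω)v‖ ≤ C̃ e^{−β̃ n}‖v‖ for all n ≥ 0 and v ∈ V(ω). -/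
open MeasureTheory Filter Topology

noncomputable section

variable {Ω : Type*} [MetricSpace Ω] [CompactSpace Ω]
  [MeasurableSpace Ω] [BorelSpace Ω]

attribute [local instance] Matrix.frobeniusNormedAddCommGroup

set_option linter.unusedSectionVars false

section Helpers

lemma frob_sqrt (B : Matrix (Fin 2) (Fin 2) ℝ) :
    ‖B‖ = Real.sqrt (B 0 0 ^ 2 + B 0 1 ^ 2 + B 1 0 ^ 2 + B 1 1 ^ 2) := by
  rw [Matrix.frobenius_norm_def, Real.sqrt_eq_rpow]
  congr 1
  simp [Fin.sum_univ_two, Real.rpow_two, Real.norm_eq_abs, sq_abs]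
  ring

lemma one_le_norm_of_det (B : Matrix (Fin 2) (Fin 2) ℝ) (h : B.det = 1) : 1 ≤ ‖B‖ := by
  rw [Matrix.det_fin_two] at h
  rw [frob_sqrt, show (1:ℝ) = Real.sqrt 1 from Real.sqrt_one.symm]
  apply Real.sqrt_le_sqrt
  nlinarith [sq_nonneg (B 0 0 - B 1 1), sq_nonneg (B 0 1 + B 1 0)]

lemma entry_le (B : Matrix (Fin 2) (Fin 2) ℝ) (i j : Fin 2) : |B i j| ≤ ‖B‖ := by
  have h : ∀ i j : Fin 2, B i j ^ 2 ≤ B 0 0 ^ 2 + B 0 1 ^ 2 + B 1 0 ^ 2 + B 1 1 ^ 2 := by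
    simp only [Fin.forall_fin_two]
    refine ⟨⟨?_, ?_⟩, ?_, ?_⟩ <;>
      nlinarith [sq_nonneg (B 0 0), sq_nonneg (B 0 1), sq_nonneg (B 1 0), sq_nonneg (B 1 1)]
  rw [frob_sqrt, ← Real.sqrt_sq_eq_abs]
  exact Real.sqrt_le_sqrt (h i j)

lemma mulVec_norm_le (B : Matrix (Fin 2) (Fin 2) ℝ) (u : Fin 2 → ℝ) :
    ‖B.mulVec u‖ ≤ 2 * ‖B‖ * ‖u‖ := by
  have hB : (0:ℝ) ≤ ‖B‖ := norm_nonneg _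
  have hu : (0:ℝ) ≤ ‖u‖ := norm_nonneg _
  rw [pi_norm_le_iff_of_nonneg (by positivity)]
  intro i
  have h0 : |u 0| ≤ ‖u‖ := by simpa using norm_le_pi_norm u 0
  have h1 : |u 1| ≤ ‖u‖ := by simpa using norm_le_pi_norm u 1
  have hmv : B.mulVec u i = B i 0 * u 0 + B i 1 * u 1 := by
    simp [Matrix.mulVec, dotProduct, Fin.sum_univ_two]
  rw [Real.norm_eq_abs, hmv]
  calc |B i 0 * u 0 + B i 1 * u 1| ≤ |B i 0 * u 0| + |B i 1 * u 1| := abs_add_le _ _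
    _ = |B i 0| * |u 0| + |B i 1| * |u 1| := by rw [abs_mul, abs_mul]
    _ ≤ ‖B‖ * ‖u‖ + ‖B‖ * ‖u‖ :=
        add_le_add (mul_le_mul (entry_le B i 0) h0 (abs_nonneg _) hB)
          (mul_le_mul (entry_le B i 1) h1 (abs_nonneg _) hB)
    _ = 2 * ‖B‖ * ‖u‖ := by ring

lemma continuous_entry (i j : Fin 2) :
    Continuous (fun A : Matrix (Fin 2) (Fin 2) ℝ => A i j) := by
  refine (LipschitzWith.of_dist_le_mul (K := 1) fun A B => ?_).continuous
  simp only [NNReal.coe_one, one_mul, dist_eq_norm]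
  simpa [Matrix.sub_apply] using entry_le (A - B) i j

lemma exists_small (C β : ℝ) (hβ : 0 < β) : ∃ m : ℕ, C * Real.exp (-β * m) < 1 := by
  have h1 : Real.exp (-β) < 1 := Real.exp_lt_one_iff.2 (by linarith)
  have h : Tendsto (fun m : ℕ => C * Real.exp (-β) ^ m) atTop (nhds (C * 0)) :=
    (tendsto_pow_atTop_nhds_zero_of_lt_one (le_of_lt (Real.exp_pos _)) h1).const_mul C
  rw [mul_zero] at h
  obtain ⟨m, hm⟩ := (h.eventually_lt_const one_pos).exists
  exact ⟨m, by rwa [show (-β) * m = m * (-β) by ring, Real.exp_nat_mul]⟩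

lemma det_fwd (T : Ω ≃ₜ Ω) (M : Ω → Matrix (Fin 2) (Fin 2) ℝ)
    (hdet : ∀ x, (M x).det = 1) (n : ℕ) (x : Ω) : (fwd T M n x).det = 1 := by
  induction n with
  | zero => simp [fwd]
  | succ n ih => simp [fwd, Matrix.det_mul, ih, hdet]

lemma cocZ_natCast (T : Ω ≃ₜ Ω) (M : Ω → Matrix (Fin 2) (Fin 2) ℝ) (n : ℕ) (x : Ω) :
    cocZ T M (n : ℤ) x = fwd T M n x := by
  simp [cocZ]

lemma cocZ_zero (T : Ω ≃ₜ Ω) (M : Ω → Matrix (Fin 2) (Fin 2) ℝ) (x : Ω) :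
    cocZ T M 0 x = 1 := by
  simp [cocZ, fwd]

lemma mulVecLin_inj {A B : Matrix (Fin 2) (Fin 2) ℝ}
    (h : A.mulVecLin = B.mulVecLin) : A = B := by
  ext i j
  have h2 := congrFun (LinearMap.congr_fun h (Pi.single j 1)) i
  simpa [Matrix.mulVecLin_apply, Matrix.mulVec_single] using h2

lemma rank_one_of_proj (Q : Matrix (Fin 2) (Fin 2) ℝ) (hQ : Q * Q = Q)
    (h0 : Q ≠ 0) (h1 : Q ≠ 1) :
    Module.finrank ℝ (LinearMap.range Q.mulVecLin) = 1 := by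
  have hcomp : Q.mulVecLin ∘ₗ Q.mulVecLin = Q.mulVecLin := by
    rw [← Matrix.mulVecLin_mul, hQ]
  have hrange : LinearMap.range Q.mulVecLin ≠ ⊥ := by
    intro h
    apply h0
    have hz : Q.mulVecLin = 0 := LinearMap.range_eq_bot.1 h
    exact mulVecLin_inj (by rw [hz, Matrix.mulVecLin_zero])
  have hker : LinearMap.ker Q.mulVecLin ≠ ⊥ := by
    intro h
    apply h1
    have hinj : Function.Injective Q.mulVecLin := LinearMap.ker_eq_bot.1 h
    apply mulVecLin_inj (B := 1)
    rw [Matrix.mulVecLin_one]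
    refine LinearMap.ext fun v => ?_
    exact hinj (by simpa using LinearMap.congr_fun hcomp v)
  have hadd := LinearMap.finrank_range_add_finrank_ker Q.mulVecLin
  rw [Module.finrank_fin_fun] at hadd
  have hr : 0 < Module.finrank ℝ (LinearMap.range Q.mulVecLin) :=
    Module.finrank_pos_iff.2 (Submodule.nontrivial_iff_ne_bot.2 hrange)
  have hk : 0 < Module.finrank ℝ (LinearMap.ker Q.mulVecLin) :=
    Module.finrank_pos_iff.2 (Submodule.nontrivial_iff_ne_bot.2 hker)
  omega

lemma span_eq_of_rank_one (W : Submodule ℝ (Fin 2 → ℝ)) (hW : Module.finrank ℝ W = 1)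
    {v : Fin 2 → ℝ} (hv : v ∈ W) (h0 : v ≠ 0) : (Submodule.span ℝ {v}) = W := by
  apply Submodule.eq_of_le_of_finrank_le (Submodule.span_le.2 (by simpa))
  rw [hW, finrank_span_singleton h0]

lemma continuous_mulVec_apply (Q : Ω → Matrix (Fin 2) (Fin 2) ℝ) (hQ : Continuous Q)
    (w : Fin 2 → ℝ) : Continuous fun x => (Q x).mulVec w := by
  apply continuous_pi; intro i
  have h : (fun x => (Q x).mulVec w i) = fun x => Q x i 0 * w 0 + Q x i 1 * w 1 := by
    funext x; simp [Matrix.mulVec, dotProduct, Fin.sum_univ_two]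
  rw [h]
  exact (((continuous_entry i 0).comp hQ).mul continuous_const).add
    (((continuous_entry i 1).comp hQ).mul continuous_const)

lemma continuous_dir (Q : Ω → Matrix (Fin 2) (Fin 2) ℝ) (hQ : Continuous Q)
    (hr : ∀ x, Module.finrank ℝ (LinearMap.range (Q x).mulVecLin) = 1) :
    Continuous fun x => Projectivization.mk'' (LinearMap.range (Q x).mulVecLin) (hr x) := by
  rw [continuous_iff_continuousAt]
  intro x₀
  obtain ⟨w₀, hw₀⟩ : ∃ w, (Q x₀).mulVec w ≠ 0 := by
    by_contra hc; push_neg at hc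
    have hz : LinearMap.range (Q x₀).mulVecLin = ⊥ := by
      rw [LinearMap.range_eq_bot]
      exact LinearMap.ext fun v => by simpa [Matrix.mulVecLin_apply] using hc v
    have h1 := hr x₀
    rw [hz, finrank_bot] at h1
    exact one_ne_zero h1.symm
  set S : Set Ω := {x | (Q x).mulVec w₀ ≠ 0} with hSdef
  have hS : IsOpen S := isOpen_compl_singleton.preimage (continuous_mulVec_apply Q hQ w₀)
  have hmem : x₀ ∈ S := hw₀
  apply ContinuousOn.continuousAt ?_ (hS.mem_nhds hmem)
  rw [continuousOn_iff_continuous_restrict]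
  have hrestr : S.domRestrict
        (fun x => Projectivization.mk'' (LinearMap.range (Q x).mulVecLin) (hr x))
      = fun y : S => Projectivization.mk ℝ ((Q y.1).mulVec w₀) y.2 := by
    funext y
    apply Projectivization.submodule_injective
    simp only [Set.domRestrict_apply, Projectivization.submodule_mk'',
      Projectivization.submodule_mk]
    exact (span_eq_of_rank_one _ (hr y.1) ⟨w₀, by simp [Matrix.mulVecLin_apply]⟩ y.2).symm
  rw [hrestr]
  have h2 : (fun y : S => Projectivization.mk ℝ ((Q y.1).mulVec w₀) y.2)
      = Projectivization.mk' ℝ ∘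
        (fun y : S => (⟨(Q y.1).mulVec w₀, y.2⟩ : {v : Fin 2 → ℝ // v ≠ 0})) := rfl
  rw [h2]
  exact continuous_quotient_mk'.comp
    (Continuous.subtype_mk ((continuous_mulVec_apply Q hQ w₀).comp continuous_subtype_val) _)

end Helpers

/-- for a continuous `SL(2,ℝ)`-cocycle over a homeomorphism of a
compact metric space, exponential dichotomy (ii) implies that the ranges of `P(ω)` and
`1 - P(ω)` define continuous maps into projective space along which the cocycle
contracts exponentially in forward, resp.\ backward, time. -/
theorem directions_of_dichotomy
    (T : Ω ≃ₜ Ω)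
    (M : Ω → Matrix (Fin 2) (Fin 2) ℝ) (hM : Continuous M)
    (hdet : ∀ x, (M x).det = 1)
    (P : Ω → Matrix (Fin 2) (Fin 2) ℝ) (hPcont : Continuous P)
    (hProj : ∀ x, P x * P x = P x)
    (C : ℝ) (hC : 0 < C) (β : ℝ) (hβ : 0 < β)
    (hPest : ∀ x : Ω, ∀ n m : ℤ, m ≤ n →
      ‖cocZ T M n x * P x * (cocZ T M m x)⁻¹‖ ≤ C * Real.exp (-β * (n - m)))
    (hQest : ∀ x : Ω, ∀ n m : ℤ, n ≤ m →
      ‖cocZ T M n x * (1 - P x) * (cocZ T M m x)⁻¹‖ ≤ C * Real.exp (-β * (m - n))) :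
    ∃ U V : Ω → Projectivization ℝ (Fin 2 → ℝ), Continuous U ∧ Continuous V ∧
      (∀ x, (U x).submodule = LinearMap.range (P x).mulVecLin) ∧
      (∀ x, (V x).submodule = LinearMap.range (1 - P x).mulVecLin) ∧
      ∃ C' > (0 : ℝ), ∃ β' > (0 : ℝ),
        (∀ x : Ω, ∀ u ∈ (U x).submodule, ∀ n : ℕ,
          ‖(fwd T M n x).mulVec u‖ ≤ C' * Real.exp (-β' * n) * ‖u‖) ∧
        (∀ x : Ω, ∀ v ∈ (V x).submodule, ∀ n : ℕ,
          ‖(cocZ T M (-(n : ℤ)) x).mulVec v‖ ≤ C' * Real.exp (-β' * n) * ‖v‖) := by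
  -- P x is neither 0 nor 1
  have hP1 : ∀ x, P x ≠ 1 := by
    intro x hx
    obtain ⟨m, hm⟩ := exists_small C β hβ
    have key := hPest x (m : ℤ) 0 (Int.natCast_nonneg m)
    rw [hx, mul_one, cocZ_zero, inv_one, mul_one, cocZ_natCast] at key
    have h1 := one_le_norm_of_det _ (det_fwd T M hdet m x)
    have hcast : C * Real.exp (-β * ((m : ℤ) - (0 : ℤ) : ℤ)) = C * Real.exp (-β * m) := by
      push_cast; ring_nf
    push_cast at key
    simp only [sub_zero] at key
    linarith
  have hP0 : ∀ x, P x ≠ 0 := by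
    intro x hx
    obtain ⟨m, hm⟩ := exists_small C β hβ
    have key := hQest x 0 (m : ℤ) (Int.natCast_nonneg m)
    rw [hx, sub_zero, cocZ_zero, one_mul, one_mul, cocZ_natCast] at key
    have hdet' : ((fwd T M m x)⁻¹).det = 1 := by
      rw [Matrix.det_nonsing_inv, det_fwd T M hdet, Ring.inverse_one]
    have h1 := one_le_norm_of_det _ hdet'
    push_cast at key
    simp only [sub_zero] at key
    linarith
  have hQproj : ∀ x, (1 - P x) * (1 - P x) = 1 - P x := by
    intro x
    have h : (1 - P x) * (1 - P x) = 1 - P x - P x + P x * P x := by noncomm_ring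
    rw [h, hProj x]
    abel
  have hrU : ∀ x, Module.finrank ℝ (LinearMap.range (P x).mulVecLin) = 1 :=
    fun x => rank_one_of_proj _ (hProj x) (hP0 x) (hP1 x)
  have hrV : ∀ x, Module.finrank ℝ (LinearMap.range (1 - P x).mulVecLin) = 1 := by
    intro x
    refine rank_one_of_proj _ (hQproj x) ?_ ?_
    · intro h; exact hP1 x (by rwa [sub_eq_zero, eq_comm] at h)
    · intro h; exact hP0 x (by rwa [sub_eq_self] at h)
  refine ⟨fun x => Projectivization.mk'' _ (hrU x),
    fun x => Projectivization.mk'' _ (hrV x),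
    continuous_dir P hPcont hrU,
    continuous_dir (fun x => 1 - P x) (continuous_const.sub hPcont) hrV,
    fun x => Projectivization.submodule_mk'' _ _,
    fun x => Projectivization.submodule_mk'' _ _,
    2 * C, by linarith, β, hβ, ?_, ?_⟩
  · intro x u hu n
    rw [Projectivization.submodule_mk''] at hu
    obtain ⟨w, hw⟩ := hu
    have hPu : (P x).mulVec u = u := by
      rw [← hw]
      simp only [Matrix.mulVecLin_apply, Matrix.mulVec_mulVec, hProj x]
    have key := hPest x (n : ℤ) 0 (Int.natCast_nonneg n)
    rw [cocZ_zero, inv_one, mul_one, cocZ_natCast] at key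
    push_cast at key
    simp only [sub_zero] at key
    calc ‖(fwd T M n x).mulVec u‖ = ‖(fwd T M n x * P x).mulVec u‖ := by
          rw [← Matrix.mulVec_mulVec, hPu]
      _ ≤ 2 * ‖fwd T M n x * P x‖ * ‖u‖ := mulVec_norm_le _ _
      _ ≤ 2 * (C * Real.exp (-β * n)) * ‖u‖ := by
          have := norm_nonneg u
          nlinarith [norm_nonneg (fwd T M n x * P x)]
      _ = 2 * C * Real.exp (-β * n) * ‖u‖ := by ring
  · intro x v hv n
    rw [Projectivization.submodule_mk''] at hv
    obtain ⟨w, hw⟩ := hv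
    have hPv : (1 - P x).mulVec v = v := by
      rw [← hw]
      simp only [Matrix.mulVecLin_apply, Matrix.mulVec_mulVec, hQproj x]
    have key := hQest x (-(n : ℤ)) 0 (by omega)
    rw [cocZ_zero, inv_one, mul_one] at key
    push_cast at key
    simp only [sub_neg_eq_add, zero_add, zero_sub, neg_neg] at key
    calc ‖(cocZ T M (-(n : ℤ)) x).mulVec v‖
        = ‖(cocZ T M (-(n : ℤ)) x * (1 - P x)).mulVec v‖ := by
          rw [← Matrix.mulVec_mulVec, hPv]
      _ ≤ 2 * ‖cocZ T M (-(n : ℤ)) x * (1 - P x)‖ * ‖v‖ := mulVec_norm_le _ _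
      _ ≤ 2 * (C * Real.exp (-β * n)) * ‖v‖ := by
          have := norm_nonneg v
          nlinarith [norm_nonneg (cocZ T M (-(n : ℤ)) x * (1 - P x))]
      _ = 2 * C * Real.exp (-β * n) * ‖v‖ := by ring


end
end
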